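/- arXiv:2102.13266 — 3 statements merged into one kernel-verified Lean document; each statement's English description precedes it below -/
import Mathlib

section
/- Let H be a real Hilbert space and k : ℝⁿ → H a continuous map. Let T > 0, let γ : [0,T] → ℝⁿ be continuous, and let q > 0. Then there exists a unique element Γ_{γ,q} ∈ H such that ⟪g, Γ_{γ,q}⟫ = (1/Γ(q)) ∫₀ᵀ (T−t)^{q−1} ⟪g, k(γ(t))⟫ dt for every g ∈ H; moreover, for every x ∈ ℝⁿ, ⟪Γ_{γ,q}, k(x)⟫ = (1/Γ(q)) ∫₀ᵀ (T−t)^{q−1} ⟪k(γ(t)), k(x)⟫ dt. -/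
/-! The Riesz representative is the Bochner integral
`Γ_{γ,q} = (1/Γ(q)) ∫₀ᵀ (T - t)^(q-1) • k(γ t) dt`, which exists because the weight
`(T - t)^(q-1)` is integrable for `q > 0` and `k ∘ γ` is bounded on `[0, T]`. Inner products
commute with the integral, which gives the defining identity; uniqueness holds because an element
of `H` is determined by its inner products, and the kernel formula is the identity at `g = k x`. -/

open MeasureTheory Set

theorem integrableOn_sub_rpow_Icc {q : ℝ} (hq : 0 < q) (a b : ℝ) :
    IntegrableOn (fun t : ℝ => (b - t) ^ (q - 1)) (Icc a b) := by
  rcases le_or_gt a b with hab | hab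
  · have h : IntervalIntegrable (fun t : ℝ => (b - t) ^ (q - 1)) volume (b - (b - a)) (b - 0) :=
      (intervalIntegral.intervalIntegrable_rpow' (by linarith)).comp_sub_left b
    rw [sub_sub_cancel, sub_zero] at h
    exact (intervalIntegrable_iff_integrableOn_Icc_of_le hab).mp h
  · simp [Icc_eq_empty_of_lt hab]

theorem inner_integral_smul {α H : Type*} [MeasurableSpace α] [NormedAddCommGroup H]
    [InnerProductSpace ℝ H] [CompleteSpace H] {μ : Measure α} {φ : α → ℝ} {f : α → H}
    (hf : Integrable (fun t => φ t • f t) μ) (g : H) :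
    inner ℝ g (∫ t, φ t • f t ∂μ) = ∫ t, φ t * inner ℝ g (f t) ∂μ := by
  simp only [← integral_inner hf, inner_smul_right]

section OccupationKernel

variable {E H : Type*} [NormedAddCommGroup H] [InnerProductSpace ℝ H]

noncomputable def occupationKernel (k : E → H) (γ : ℝ → E) (T q : ℝ) : H :=
  (1 / Real.Gamma q) • ∫ t in Icc 0 T, (T - t) ^ (q - 1) • k (γ t)

theorem inner_occupationKernel [CompleteSpace H] {k : E → H} {γ : ℝ → E} {T q : ℝ}
    (hkγ : ContinuousOn (fun t => k (γ t)) (Icc 0 T)) (hq : 0 < q) (g : H) :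
    inner ℝ g (occupationKernel k γ T q) =
      (1 / Real.Gamma q) * ∫ t in Icc 0 T, (T - t) ^ (q - 1) * inner ℝ g (k (γ t)) := by
  have hint : IntegrableOn (fun t => (T - t) ^ (q - 1) • k (γ t)) (Icc 0 T) :=
    (integrableOn_sub_rpow_Icc hq 0 T).smul_continuousOn hkγ isCompact_Icc
  rw [occupationKernel, inner_smul_right, inner_integral_smul hint]

end OccupationKernel

theorem occupation_kernel_exists_unique_general
    {n : ℕ} {H : Type*} [NormedAddCommGroup H] [InnerProductSpace ℝ H] [CompleteSpace H]
    (k : EuclideanSpace ℝ (Fin n) → H) (hk : Continuous k)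
    (T : ℝ)
    (γ : ℝ → EuclideanSpace ℝ (Fin n)) (hγ : ContinuousOn γ (Set.Icc 0 T))
    (q : ℝ) (hq : 0 < q) :
    ∃ Γγq : H,
      (∀ g : H, (inner ℝ g Γγq : ℝ) =
        (1 / Real.Gamma q) * ∫ t in Set.Icc 0 T, (T - t) ^ (q - 1) * (inner ℝ g (k (γ t)) : ℝ)) ∧
      (∀ Γ' : H, (∀ g : H, (inner ℝ g Γ' : ℝ) =
        (1 / Real.Gamma q) * ∫ t in Set.Icc 0 T, (T - t) ^ (q - 1) * (inner ℝ g (k (γ t)) : ℝ)) →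
        Γ' = Γγq) ∧
      (∀ x : EuclideanSpace ℝ (Fin n), (inner ℝ Γγq (k x) : ℝ) =
        (1 / Real.Gamma q) * ∫ t in Set.Icc 0 T,
          (T - t) ^ (q - 1) * (inner ℝ (k (γ t)) (k x) : ℝ)) := by
  have hrepr := inner_occupationKernel (k := k) (γ := γ) (hk.comp_continuousOn hγ) hq
  refine ⟨occupationKernel k γ T q, hrepr,
    fun Γ' hΓ' => ext_inner_left ℝ fun g => (hΓ' g).trans (hrepr g).symm, fun x => ?_⟩
  simp_rw [real_inner_comm (k x), hrepr]

/-- Let `H` be a real Hilbert space and `k : ℝⁿ → H` a continuous map (the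
feature map of an RKHS with kernel `K(x,y) = ⟪k y, k x⟫`).  For `T > 0`, `γ : [0,T] → ℝⁿ`
continuous and `q > 0`, there exists a unique `Γγq ∈ H` (the occupation kernel of order `q`
of `γ`) such that `⟪g, Γγq⟫ = (1/Γ(q)) ∫₀ᵀ (T - t)^(q-1) ⟪g, k (γ t)⟫ dt` for all `g ∈ H`;
moreover `⟪Γγq, k x⟫ = (1/Γ(q)) ∫₀ᵀ (T - t)^(q-1) ⟪k (γ t), k x⟫ dt` for every `x ∈ ℝⁿ`. -/
theorem occupation_kernel_exists_unique
    {n : ℕ} {H : Type*} [NormedAddCommGroup H] [InnerProductSpace ℝ H] [CompleteSpace H]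
    (k : EuclideanSpace ℝ (Fin n) → H) (hk : Continuous k)
    (T : ℝ) (hT : 0 < T)
    (γ : ℝ → EuclideanSpace ℝ (Fin n)) (hγ : ContinuousOn γ (Set.Icc 0 T))
    (q : ℝ) (hq : 0 < q) :
    ∃ Γγq : H,
      (∀ g : H, (inner ℝ g Γγq : ℝ) =
        (1 / Real.Gamma q) * ∫ t in Set.Icc 0 T, (T - t) ^ (q - 1) * (inner ℝ g (k (γ t)) : ℝ)) ∧
      (∀ Γ' : H, (∀ g : H, (inner ℝ g Γ' : ℝ) =
        (1 / Real.Gamma q) * ∫ t in Set.Icc 0 T, (T - t) ^ (q - 1) * (inner ℝ g (k (γ t)) : ℝ)) →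
        Γ' = Γγq) ∧
      (∀ x : EuclideanSpace ℝ (Fin n), (inner ℝ Γγq (k x) : ℝ) =
        (1 / Real.Gamma q) * ∫ t in Set.Icc 0 T,
          (T - t) ^ (q - 1) * (inner ℝ (k (γ t)) (k x) : ℝ)) :=
  occupation_kernel_exists_unique_general k hk T γ hγ q hq
end

section
/- Let H be a real Hilbert space and k : ℝⁿ → H a continuous map. Let f : ℝⁿ → ℝⁿ, let T > 0, and let γ : [0,T] → ℝⁿ be continuously differentiable with γ′(t) = f(γ(t)) for all t ∈ [0,T]. Suppose g, h ∈ H are such that the function x ↦ ⟪g, k(x)⟫ is differentiable on ℝⁿ with ∇_x ⟪g, k(x)⟫ · f(x) = ⟪h, k(x)⟫ for every x ∈ ℝⁿ (i.e., h represents the image of g under the Liouville operator with symbol f). Let Γ_γ ∈ H be the occupation kernel of order 1 of γ, i.e., ⟪u, Γ_γ⟫ = ∫₀ᵀ ⟪u, k(γ(t))⟫ dt for all u ∈ H. Then ⟪h, Γ_γ⟫ = ⟪g, k(γ(T))⟫ − ⟪g, k(γ(0))⟫. -/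
open MeasureTheory

/-!
Along a trajectory `γ̇ = f(γ)`, the chain rule shows that `t ↦ ⟪g, k(γ t)⟫` has derivative
`∇⟪g, k⟫(γ t) · f(γ t) = ⟪h, k(γ t)⟫`. Integrating over `[0, T]` by the fundamental theorem of
calculus and rewriting the integral as `⟪h, Γγ⟫` by the defining property of the occupation
kernel gives the claim.
-/

section Trajectory

variable {E : Type*} [NormedAddCommGroup E] [InnerProductSpace ℝ E] [CompleteSpace E]

theorem HasGradientAt.hasDerivAt_comp {φ : E → ℝ} {φ' v : E} {γ : ℝ → E} {t : ℝ}
    (hφ : HasGradientAt φ φ' (γ t)) (hγ : HasDerivAt γ v t) :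
    HasDerivAt (fun s => φ (γ s)) (inner ℝ φ' v) t := by
  simpa [InnerProductSpace.toDual_apply_apply, Function.comp_def] using
    hφ.hasFDerivAt.comp_hasDerivAt t hγ

theorem integral_Icc_comp_trajectory_eq_sub {φ ψ : E → ℝ} {grad f : E → E} {γ : ℝ → E}
    {a b : ℝ} (hab : a ≤ b) (hψ : Continuous ψ) (hgrad : ∀ x, HasGradientAt φ (grad x) x)
    (hliou : ∀ x, inner ℝ (grad x) (f x) = ψ x)
    (hγ : ∀ t ∈ Set.Icc a b, HasDerivAt γ (f (γ t)) t) :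
    ∫ t in Set.Icc a b, ψ (γ t) = φ (γ b) - φ (γ a) := by
  rw [integral_Icc_eq_integral_Ioc, ← intervalIntegral.integral_of_le hab]
  have hderiv : ∀ t ∈ Set.uIcc a b, HasDerivAt (fun s => φ (γ s)) (ψ (γ t)) t := by
    intro t ht
    rw [Set.uIcc_of_le hab] at ht
    exact hliou (γ t) ▸ (hgrad (γ t)).hasDerivAt_comp (hγ t ht)
  have hγ_cont : ContinuousOn γ (Set.uIcc a b) := by
    rw [Set.uIcc_of_le hab]
    exact fun t ht => (hγ t ht).continuousAt.continuousWithinAt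
  exact intervalIntegral.integral_eq_sub_of_hasDerivAt hderiv
    ((hψ.comp_continuousOn hγ_cont).intervalIntegrable)

end Trajectory

theorem liouville_adjoint_occupation_kernel_general
    {n : ℕ} {H : Type*} [NormedAddCommGroup H] [InnerProductSpace ℝ H]
    (k : EuclideanSpace ℝ (Fin n) → H) (hk : Continuous k)
    (f : EuclideanSpace ℝ (Fin n) → EuclideanSpace ℝ (Fin n))
    (T : ℝ) (hT : 0 < T)
    (γ : ℝ → EuclideanSpace ℝ (Fin n))
    (hγ : ∀ t ∈ Set.Icc (0 : ℝ) T, HasDerivAt γ (f (γ t)) t)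
    (g h : H) (grad : EuclideanSpace ℝ (Fin n) → EuclideanSpace ℝ (Fin n))
    (hgrad : ∀ x, HasGradientAt (fun y => (inner ℝ g (k y) : ℝ)) (grad x) x)
    (hliou : ∀ x, (inner ℝ (grad x) (f x) : ℝ) = (inner ℝ h (k x) : ℝ))
    (Γγ : H)
    (hΓγ : ∀ u : H, (inner ℝ u Γγ : ℝ) = ∫ t in Set.Icc (0 : ℝ) T, (inner ℝ u (k (γ t)) : ℝ)) :
    (inner ℝ h Γγ : ℝ) = (inner ℝ g (k (γ T)) : ℝ) - (inner ℝ g (k (γ 0)) : ℝ) := by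
  rw [hΓγ h]
  exact integral_Icc_comp_trajectory_eq_sub (ψ := fun x => inner ℝ h (k x)) hT.le
    (continuous_const.inner hk) hgrad hliou hγ

/-- Let `H` be a real Hilbert space and `k : ℝⁿ → H` a continuous map (the
feature map of an RKHS, in which evaluation of `g` at `x` is `⟪g, k x⟫`).  Let
`f : ℝⁿ → ℝⁿ` and let `γ : [0,T] → ℝⁿ` be continuously differentiable with
`γ' t = f (γ t)` on `[0,T]`.  Suppose `g, h ∈ H` are such that `x ↦ ⟪g, k x⟫` has
gradient `grad x` at every `x` and `⟪grad x, f x⟫ = ⟪h, k x⟫` (so `h` represents the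
image of `g` under the Liouville operator with symbol `f`).  If `Γγ` is the occupation
kernel of order 1 of `γ`, i.e. `⟪u, Γγ⟫ = ∫₀ᵀ ⟪u, k (γ t)⟫ dt` for all `u ∈ H`, then
`⟪h, Γγ⟫ = ⟪g, k (γ T)⟫ - ⟪g, k (γ 0)⟫`. -/
theorem liouville_adjoint_occupation_kernel
    {n : ℕ} {H : Type*} [NormedAddCommGroup H] [InnerProductSpace ℝ H] [CompleteSpace H]
    (k : EuclideanSpace ℝ (Fin n) → H) (hk : Continuous k)
    (f : EuclideanSpace ℝ (Fin n) → EuclideanSpace ℝ (Fin n))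
    (T : ℝ) (hT : 0 < T)
    (γ : ℝ → EuclideanSpace ℝ (Fin n))
    (hγ : ∀ t ∈ Set.Icc (0 : ℝ) T, HasDerivAt γ (f (γ t)) t)
    (g h : H) (grad : EuclideanSpace ℝ (Fin n) → EuclideanSpace ℝ (Fin n))
    (hgrad : ∀ x, HasGradientAt (fun y => (inner ℝ g (k y) : ℝ)) (grad x) x)
    (hliou : ∀ x, (inner ℝ (grad x) (f x) : ℝ) = (inner ℝ h (k x) : ℝ))
    (Γγ : H)
    (hΓγ : ∀ u : H, (inner ℝ u Γγ : ℝ) = ∫ t in Set.Icc (0 : ℝ) T, (inner ℝ u (k (γ t)) : ℝ)) :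
    (inner ℝ h Γγ : ℝ) = (inner ℝ g (k (γ T)) : ℝ) - (inner ℝ g (k (γ 0)) : ℝ) :=
  liouville_adjoint_occupation_kernel_general k hk f T hT γ hγ g h grad hgrad hliou Γγ hΓγ
end

section
/- Let H be a real Hilbert space and k : ℝⁿ → H a continuous map. Let q > 0, let T₁, T₂ > 0, and let γ₁ : [0,T₁] → ℝⁿ and γ₂ : [0,T₂] → ℝⁿ be continuous signals with occupation kernels of order q denoted Γ_{γ₁,q} and Γ_{γ₂,q}. Then ⟪Γ_{γ₁,q}, Γ_{γ₂,q}⟫ = (1/Γ(q))² ∫₀^{T₂} ∫₀^{T₁} (T₁−t)^{q−1} (T₂−τ)^{q−1} ⟪k(γ₁(t)), k(γ₂(τ))⟫ dt dτ. -/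
open MeasureTheory

/-! Test the defining identity of `Γ₂` against `g = Γ₁`, then expand each `⟪Γ₁, k (γ₂ τ)⟫` by the
defining identity of `Γ₁`; only constants move across integrals, so Fubini never enters. -/

theorem inner_eq_integral_integral_of_forall_inner_eq
    {H α β : Type*} [NormedAddCommGroup H] [InnerProductSpace ℝ H]
    [MeasurableSpace α] [MeasurableSpace β] {μ : Measure α} {ν : Measure β}
    {c₁ c₂ : ℝ} {w₁ : α → ℝ} {w₂ : β → ℝ} {f₁ : α → H} {f₂ : β → H} {Γ₁ Γ₂ : H}
    (h₁ : ∀ g : H, (inner ℝ g Γ₁ : ℝ) = c₁ * ∫ t, w₁ t * (inner ℝ g (f₁ t) : ℝ) ∂μ)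
    (h₂ : ∀ g : H, (inner ℝ g Γ₂ : ℝ) = c₂ * ∫ τ, w₂ τ * (inner ℝ g (f₂ τ) : ℝ) ∂ν) :
    (inner ℝ Γ₁ Γ₂ : ℝ) =
      c₁ * c₂ * ∫ τ, ∫ t, w₁ t * w₂ τ * (inner ℝ (f₁ t) (f₂ τ) : ℝ) ∂μ ∂ν := by
  have inner_Γ₁ : ∀ τ, w₂ τ * (inner ℝ Γ₁ (f₂ τ) : ℝ) =
      c₁ * ∫ t, w₁ t * w₂ τ * (inner ℝ (f₁ t) (f₂ τ) : ℝ) ∂μ := by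
    intro τ
    calc w₂ τ * (inner ℝ Γ₁ (f₂ τ) : ℝ)
        = c₁ * (w₂ τ * ∫ t, w₁ t * (inner ℝ (f₂ τ) (f₁ t) : ℝ) ∂μ) := by
          rw [real_inner_comm, h₁]; ring
      _ = c₁ * ∫ t, w₁ t * w₂ τ * (inner ℝ (f₁ t) (f₂ τ) : ℝ) ∂μ := by
          rw [← integral_const_mul]
          congr 1
          refine integral_congr_ae (Filter.Eventually.of_forall fun t => ?_)
          simp only [real_inner_comm (f₁ t)]
          ring
  rw [h₂ Γ₁]
  simp_rw [inner_Γ₁, integral_const_mul]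
  ring

theorem occupation_kernel_gram_entry_general
    {n : ℕ} {H : Type*} [NormedAddCommGroup H] [InnerProductSpace ℝ H]
    (k : EuclideanSpace ℝ (Fin n) → H)
    (q : ℝ) (T₁ T₂ : ℝ)
    (γ₁ γ₂ : ℝ → EuclideanSpace ℝ (Fin n))
    (Γ₁ Γ₂ : H)
    (hΓ₁ : ∀ g : H, (inner ℝ g Γ₁ : ℝ) =
      (1 / Real.Gamma q) * ∫ t in Set.Icc 0 T₁, (T₁ - t) ^ (q - 1) * (inner ℝ g (k (γ₁ t)) : ℝ))
    (hΓ₂ : ∀ g : H, (inner ℝ g Γ₂ : ℝ) =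
      (1 / Real.Gamma q) * ∫ t in Set.Icc 0 T₂, (T₂ - t) ^ (q - 1) * (inner ℝ g (k (γ₂ t)) : ℝ)) :
    (inner ℝ Γ₁ Γ₂ : ℝ) =
      (1 / Real.Gamma q) ^ 2 * ∫ τ in Set.Icc 0 T₂, ∫ t in Set.Icc 0 T₁,
        (T₁ - t) ^ (q - 1) * (T₂ - τ) ^ (q - 1) * (inner ℝ (k (γ₁ t)) (k (γ₂ τ)) : ℝ) := by
  rw [sq]
  exact inner_eq_integral_integral_of_forall_inner_eq hΓ₁ hΓ₂

/-- Let `H` be a real Hilbert space and `k : ℝⁿ → H` a continuous map (the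
feature map of an RKHS).  For `q > 0`, continuous signals `γ₁ : [0,T₁] → ℝⁿ` and
`γ₂ : [0,T₂] → ℝⁿ` with occupation kernels of order `q` given by
`⟪g, Γᵢ⟫ = (1/Γ(q)) ∫₀^{Tᵢ} (Tᵢ-t)^(q-1) ⟪g, k (γᵢ t)⟫ dt`, the Gram entry is
`⟪Γ₁, Γ₂⟫ = (1/Γ(q))² ∫₀^{T₂} ∫₀^{T₁} (T₁-t)^(q-1) (T₂-τ)^(q-1) ⟪k (γ₁ t), k (γ₂ τ)⟫ dt dτ`. -/
theorem occupation_kernel_gram_entry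
    {n : ℕ} {H : Type*} [NormedAddCommGroup H] [InnerProductSpace ℝ H] [CompleteSpace H]
    (k : EuclideanSpace ℝ (Fin n) → H) (hk : Continuous k)
    (q : ℝ) (hq : 0 < q) (T₁ T₂ : ℝ) (hT₁ : 0 < T₁) (hT₂ : 0 < T₂)
    (γ₁ γ₂ : ℝ → EuclideanSpace ℝ (Fin n))
    (hγ₁ : ContinuousOn γ₁ (Set.Icc 0 T₁)) (hγ₂ : ContinuousOn γ₂ (Set.Icc 0 T₂))
    (Γ₁ Γ₂ : H)
    (hΓ₁ : ∀ g : H, (inner ℝ g Γ₁ : ℝ) =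
      (1 / Real.Gamma q) * ∫ t in Set.Icc 0 T₁, (T₁ - t) ^ (q - 1) * (inner ℝ g (k (γ₁ t)) : ℝ))
    (hΓ₂ : ∀ g : H, (inner ℝ g Γ₂ : ℝ) =
      (1 / Real.Gamma q) * ∫ t in Set.Icc 0 T₂, (T₂ - t) ^ (q - 1) * (inner ℝ g (k (γ₂ t)) : ℝ)) :
    (inner ℝ Γ₁ Γ₂ : ℝ) =
      (1 / Real.Gamma q) ^ 2 * ∫ τ in Set.Icc 0 T₂, ∫ t in Set.Icc 0 T₁,
        (T₁ - t) ^ (q - 1) * (T₂ - τ) ^ (q - 1) * (inner ℝ (k (γ₁ t)) (k (γ₂ τ)) : ℝ) :=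
  occupation_kernel_gram_entry_general k q T₁ T₂ γ₁ γ₂ Γ₁ Γ₂ hΓ₁ hΓ₂
end
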